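/- (Anisotropic Ladyzhenskaya inequality in 3D) Let Ω = [0,L]² × [0,1] be a periodic box, φ ∈ H¹(Ω), and p ∈ [2,6]. Then ‖φ‖_{L^p(Ω)} ≤ C_p ‖φ‖₂^{(6−p)/(2p)} (‖φ‖₂ + ‖φ_x‖₂)^{(p−2)/(2p)} (‖φ‖₂ + ‖φ_y‖₂)^{(p−2)/(2p)} (‖φ‖₂ + ‖φ_z‖₂)^{(p−2)/(2p)}. -/

import Mathlib

open MeasureTheory Set Real
open scoped ENNReal NNReal Interval

noncomputable section

/-- The periodic box Ω = [0,L]² × [0,1]. -/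
def Box (L : ℝ) : Set (ℝ × ℝ × ℝ) := Icc 0 L ×ˢ Icc 0 L ×ˢ Icc 0 1

/-- The horizontal square [0,L]². -/
def Sq (L : ℝ) : Set (ℝ × ℝ) := Icc 0 L ×ˢ Icc 0 L

/-- Partial derivative in x. -/
def pdx (f : ℝ × ℝ × ℝ → ℝ) (p : ℝ × ℝ × ℝ) : ℝ := fderiv ℝ f p (1, 0, 0)
/-- Partial derivative in y. -/
def pdy (f : ℝ × ℝ × ℝ → ℝ) (p : ℝ × ℝ × ℝ) : ℝ := fderiv ℝ f p (0, 1, 0)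
/-- Partial derivative in z. -/
def pdz (f : ℝ × ℝ × ℝ → ℝ) (p : ℝ × ℝ × ℝ) : ℝ := fderiv ℝ f p (0, 0, 1)

/-- Periodicity: period L in x and y, period 1 in z. -/
def Per (L : ℝ) (f : ℝ × ℝ × ℝ → ℝ) : Prop :=
  (∀ x y z : ℝ, f (x + L, y, z) = f (x, y, z)) ∧
  (∀ x y z : ℝ, f (x, y + L, z) = f (x, y, z)) ∧
  (∀ x y z : ℝ, f (x, y, z + 1) = f (x, y, z))

/-- The L²(Ω) norm. -/
def nL2 (L : ℝ) (f : ℝ × ℝ × ℝ → ℝ) : ℝ := (∫ p in Box L, (f p) ^ 2) ^ ((1 : ℝ) / 2)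

/-- The L² norm of the horizontal gradient ∇_h f. -/
def nGH (L : ℝ) (f : ℝ × ℝ × ℝ → ℝ) : ℝ :=
  (∫ p in Box L, (pdx f p) ^ 2 + (pdy f p) ^ 2) ^ ((1 : ℝ) / 2)

/-- Membership in ℒp of a continuous function on a compact set. -/
lemma memLp_restrict_of_continuous {α : Type*} [TopologicalSpace α] [MeasurableSpace α]
    [OpensMeasurableSpace α] [T2Space α] {μ : Measure α} {s : Set α} (hs : IsCompact s)
    (hμ : μ s ≠ ⊤) {f : α → ℝ} (hf : Continuous f) (p : ℝ≥0∞) :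
    MemLp f p (μ.restrict s) := by
  haveI : IsFiniteMeasure (μ.restrict s) :=
    ⟨by rw [Measure.restrict_apply_univ]; exact lt_top_iff_ne_top.2 hμ⟩
  obtain ⟨C, hC⟩ := hs.exists_bound_of_continuousOn hf.continuousOn
  refine MemLp.of_bound hf.aestronglyMeasurable C ?_
  exact (ae_restrict_iff' hs.isClosed.measurableSet).2 (ae_of_all _ hC)

/-- Cauchy–Schwarz for set integrals of nonneg continuous functions on a compact set. -/
lemma CS_set {α : Type*} [MeasureSpace α] [TopologicalSpace α]
    [OpensMeasurableSpace α] [T2Space α] [IsFiniteMeasureOnCompacts (volume : Measure α)]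
    {s : Set α} (hs : IsCompact s) {f g : α → ℝ} (hf : Continuous f) (hg : Continuous g)
    (hf0 : ∀ x, 0 ≤ f x) (hg0 : ∀ x, 0 ≤ g x) :
    ∫ x in s, f x * g x ≤ √(∫ x in s, f x ^ 2) * √(∫ x in s, g x ^ 2) := by
  have hconj : Real.HolderConjugate 2 2 := Real.HolderConjugate.two_two
  have h2 : (ENNReal.ofReal (2:ℝ)) = 2 := by norm_num
  have hmf : MemLp f (ENNReal.ofReal (2:ℝ)) (volume.restrict s) :=
    memLp_restrict_of_continuous hs hs.measure_lt_top.ne hf _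
  have hmg : MemLp g (ENNReal.ofReal (2:ℝ)) (volume.restrict s) :=
    memLp_restrict_of_continuous hs hs.measure_lt_top.ne hg _
  have := integral_mul_le_Lp_mul_Lq_of_nonneg hconj (ae_of_all _ hf0) (ae_of_all _ hg0) hmf hmg
  calc ∫ x in s, f x * g x ≤
      (∫ x in s, f x ^ (2:ℝ)) ^ ((1:ℝ)/2) * (∫ x in s, g x ^ (2:ℝ)) ^ ((1:ℝ)/2) := this
    _ = √(∫ x in s, f x ^ 2) * √(∫ x in s, g x ^ 2) := by
        simp_rw [Real.rpow_two, Real.sqrt_eq_rpow]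

/-- 1D Agmon-type bound. -/
lemma agmon1D {w w' : ℝ → ℝ} (hw : ∀ x, HasDerivAt w (w' x) x) (hwc' : Continuous w')
    {a b : ℝ} (hab : a < b) {t : ℝ} (ht : t ∈ Icc a b) :
    (b - a) * w t ≤ (∫ s in Icc a b, w s) + (b - a) * ∫ s in Icc a b, |w' s| := by
  have hwc : Continuous w := by
    refine continuous_iff_continuousAt.2 fun x => (hw x).continuousAt
  have hIw : IntegrableOn w (Icc a b) volume :=
    hwc.continuousOn.integrableOn_compact isCompact_Icc
  have hIw' : IntegrableOn (fun s => |w' s|) (Icc a b) volume :=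
    hwc'.abs.continuousOn.integrableOn_compact isCompact_Icc
  have habs0 : 0 ≤ ∫ s in Icc a b, |w' s| :=
    setIntegral_nonneg measurableSet_Icc fun x _ => abs_nonneg _
  have key : ∀ s ∈ Icc a b, w t - ∫ u in Icc a b, |w' u| ≤ w s := by
    intro s hs
    have hint : IntervalIntegrable w' volume s t := hwc'.intervalIntegrable s t
    have hft : ∫ u in s..t, w' u = w t - w s :=
      intervalIntegral.integral_eq_sub_of_hasDerivAt (fun u _ => hw u) hint
    have h1 : |∫ u in s..t, w' u| ≤ ∫ u in Ι s t, |w' u| := by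
      have := intervalIntegral.norm_integral_le_integral_norm_uIoc (f := w') (a := s) (b := t)
        (μ := volume)
      simpa [Real.norm_eq_abs] using this
    have h2 : ∫ u in Ι s t, |w' u| ≤ ∫ u in Icc a b, |w' u| := by
      apply setIntegral_mono_set hIw' (ae_of_all _ fun x => abs_nonneg _)
      refine HasSubset.Subset.eventuallyLE ?_
      refine (Set.Ioc_subset_Icc_self).trans ?_
      exact Set.Icc_subset_Icc (le_inf hs.1 ht.1) (sup_le hs.2 ht.2)
    have : w t - w s ≤ ∫ u in Icc a b, |w' u| := by
      calc w t - w s = ∫ u in s..t, w' u := hft.symm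
        _ ≤ |∫ u in s..t, w' u| := le_abs_self _
        _ ≤ ∫ u in Ι s t, |w' u| := h1
        _ ≤ _ := h2
    linarith
  have hconst := setIntegral_ge_of_const_le (μ := volume) measurableSet_Icc
    (by rw [Real.volume_Icc]; exact ENNReal.ofReal_ne_top) key hIw
  rw [Real.volume_real_Icc_of_le hab.le, smul_eq_mul] at hconst
  nlinarith [hconst]



lemma sliceX {f : ℝ × ℝ × ℝ → ℝ} (hf : Differentiable ℝ f) (c : ℝ × ℝ) (x : ℝ) :
    HasDerivAt (fun s => f (s, c)) (pdx f (x, c)) x := by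
  have hline : HasDerivAt (fun s : ℝ => ((s, c) : ℝ × ℝ × ℝ)) ((1 : ℝ), (0 : ℝ × ℝ)) x :=
    (hasDerivAt_id x).prodMk (hasDerivAt_const x c)
  have h := (hf (x, c)).hasFDerivAt.comp_hasDerivAt x hline
  simpa [pdx, Prod.mk_zero_zero, Function.comp_def] using h

lemma sliceY {f : ℝ × ℝ × ℝ → ℝ} (hf : Differentiable ℝ f) (c : ℝ × ℝ) (y : ℝ) :
    HasDerivAt (fun s => f (c.1, s, c.2)) (pdy f (c.1, y, c.2)) y := by
  have hline : HasDerivAt (fun s : ℝ => ((c.1, s, c.2) : ℝ × ℝ × ℝ))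
      ((0 : ℝ), (1 : ℝ), (0 : ℝ)) y :=
    (hasDerivAt_const y c.1).prodMk ((hasDerivAt_id y).prodMk (hasDerivAt_const y c.2))
  have h := (hf (c.1, y, c.2)).hasFDerivAt.comp_hasDerivAt y hline
  simpa [pdy, Function.comp_def] using h

lemma sliceZ {f : ℝ × ℝ × ℝ → ℝ} (hf : Differentiable ℝ f) (c : ℝ × ℝ) (z : ℝ) :
    HasDerivAt (fun s => f (c.1, c.2, s)) (pdz f (c.1, c.2, z)) z := by
  have hline : HasDerivAt (fun s : ℝ => ((c.1, c.2, s) : ℝ × ℝ × ℝ))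
      ((0 : ℝ), (0 : ℝ), (1 : ℝ)) z :=
    (hasDerivAt_const z c.1).prodMk ((hasDerivAt_const z c.2).prodMk (hasDerivAt_id z))
  have h := (hf (c.1, c.2, z)).hasFDerivAt.comp_hasDerivAt z hline
  simpa [pdz, Function.comp_def] using h

lemma contPdx {f : ℝ × ℝ × ℝ → ℝ} (hf : ContDiff ℝ (⊤ : ℕ∞) f) : Continuous (pdx f) := by
  have h := hf.continuous_fderiv (by simp)
  exact (isBoundedBilinearMap_apply.continuous.comp (h.prodMk continuous_const) : _)

lemma contPdy {f : ℝ × ℝ × ℝ → ℝ} (hf : ContDiff ℝ (⊤ : ℕ∞) f) : Continuous (pdy f) := by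
  have h := hf.continuous_fderiv (by simp)
  exact (isBoundedBilinearMap_apply.continuous.comp (h.prodMk continuous_const) : _)

lemma contPdz {f : ℝ × ℝ × ℝ → ℝ} (hf : ContDiff ℝ (⊤ : ℕ∞) f) : Continuous (pdz f) := by
  have h := hf.continuous_fderiv (by simp)
  exact (isBoundedBilinearMap_apply.continuous.comp (h.prodMk continuous_const) : _)



lemma restrict_prod_eq {α β : Type*} [MeasureSpace α] [MeasureSpace β]
    [SigmaFinite (volume : Measure α)] [SigmaFinite (volume : Measure β)]
    (s : Set α) (t : Set β) :
    volume.restrict (s ×ˢ t) = (volume.restrict s).prod (volume.restrict t) := by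
  rw [Measure.volume_eq_prod, Measure.prod_restrict]

lemma contParamI {h : (ℝ × ℝ) × ℝ → ℝ} (hh : Continuous h) {s : Set ℝ} (hs : IsCompact s) :
    Continuous fun c : ℝ × ℝ => ∫ x in s, h (c, x) :=
  continuous_parametric_integral_of_continuous (f := fun c x => h (c, x)) hh hs

lemma contParamR {h : ℝ × ℝ → ℝ} (hh : Continuous h) {s : Set ℝ} (hs : IsCompact s) :
    Continuous fun t : ℝ => ∫ x in s, h (t, x) :=
  continuous_parametric_integral_of_continuous (f := fun t x => h (t, x)) hh hs

lemma intOn {α : Type*} [MeasureSpace α] [TopologicalSpace α] [OpensMeasurableSpace α]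
    [T2Space α] [IsFiniteMeasureOnCompacts (volume : Measure α)]
    {f : α → ℝ} (hf : Continuous f) {s : Set α} (hs : IsCompact s) :
    IntegrableOn f s volume :=
  hf.continuousOn.integrableOn_compact hs

lemma box_compact (L : ℝ) : IsCompact (Box L) :=
  isCompact_Icc.prod (isCompact_Icc.prod isCompact_Icc)

/-- Fubini: integrate over `x` innermost. -/
lemma fubini_g1 (L : ℝ) {f : ℝ × ℝ × ℝ → ℝ} (hf : Continuous f) :
    ∫ c in Icc 0 L ×ˢ Icc (0:ℝ) 1, ∫ x in Icc (0:ℝ) L, f (x, c) = ∫ p in Box L, f p := by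
  have h1 : volume.restrict (Box L)
      = (volume.restrict (Icc (0:ℝ) L)).prod (volume.restrict (Icc 0 L ×ˢ Icc (0:ℝ) 1)) := by
    rw [show Box L = Icc (0:ℝ) L ×ˢ (Icc 0 L ×ˢ Icc (0:ℝ) 1) from rfl, restrict_prod_eq,
      restrict_prod_eq]
  have hint : Integrable f
      ((volume.restrict (Icc (0:ℝ) L)).prod (volume.restrict (Icc 0 L ×ˢ Icc (0:ℝ) 1))) := by
    rw [← h1]; exact intOn hf (box_compact L)
  calc ∫ c in Icc 0 L ×ˢ Icc (0:ℝ) 1, ∫ x in Icc (0:ℝ) L, f (x, c)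
      = ∫ z, f z ∂((volume.restrict (Icc (0:ℝ) L)).prod
          (volume.restrict (Icc 0 L ×ˢ Icc (0:ℝ) 1))) := (integral_prod_symm f hint).symm
    _ = ∫ p in Box L, f p := by rw [← h1]

/-- Fubini: split the inner square `I ×ˢ J` integral, standard order. -/
lemma fubini_std (L : ℝ) {f : ℝ × ℝ × ℝ → ℝ} (hf : Continuous f) :
    ∫ p in Box L, f p
      = ∫ x in Icc (0:ℝ) L, ∫ y in Icc (0:ℝ) L, ∫ z in Icc (0:ℝ) 1, f (x, y, z) := by
  have h1 : volume.restrict (Box L)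
      = (volume.restrict (Icc (0:ℝ) L)).prod (volume.restrict (Icc 0 L ×ˢ Icc (0:ℝ) 1)) := by
    rw [show Box L = Icc (0:ℝ) L ×ˢ (Icc 0 L ×ˢ Icc (0:ℝ) 1) from rfl, restrict_prod_eq,
      restrict_prod_eq]
  have hint : Integrable f
      ((volume.restrict (Icc (0:ℝ) L)).prod (volume.restrict (Icc 0 L ×ˢ Icc (0:ℝ) 1))) := by
    rw [← h1]; exact intOn hf (box_compact L)
  calc ∫ p in Box L, f p
      = ∫ x, ∫ w, f (x, w) ∂(volume.restrict (Icc 0 L ×ˢ Icc (0:ℝ) 1))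
          ∂(volume.restrict (Icc (0:ℝ) L)) := by rw [h1]; exact integral_prod f hint
    _ = ∫ x in Icc (0:ℝ) L, ∫ y in Icc (0:ℝ) L, ∫ z in Icc (0:ℝ) 1, f (x, y, z) := by
        refine setIntegral_congr_fun measurableSet_Icc fun x _ => ?_
        have h2 : volume.restrict (Icc 0 L ×ˢ Icc (0:ℝ) 1)
            = (volume.restrict (Icc (0:ℝ) L)).prod (volume.restrict (Icc (0:ℝ) 1)) :=
          restrict_prod_eq _ _
        have hint2 : Integrable (fun w : ℝ × ℝ => f (x, w))
            ((volume.restrict (Icc (0:ℝ) L)).prod (volume.restrict (Icc (0:ℝ) 1))) := by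
          rw [← h2]
          exact intOn (hf.comp (by fun_prop)) (isCompact_Icc.prod isCompact_Icc)
        rw [h2]
        exact integral_prod _ hint2

lemma fubini_g2 (L : ℝ) {f : ℝ × ℝ × ℝ → ℝ} (hf : Continuous f) :
    ∫ c in Icc 0 L ×ˢ Icc (0:ℝ) 1, ∫ y in Icc (0:ℝ) L, f (c.1, y, c.2) = ∫ p in Box L, f p := by
  have h2 : volume.restrict (Icc 0 L ×ˢ Icc (0:ℝ) 1)
      = (volume.restrict (Icc (0:ℝ) L)).prod (volume.restrict (Icc (0:ℝ) 1)) :=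
    restrict_prod_eq _ _
  have hcont : Continuous fun c : ℝ × ℝ => ∫ y in Icc (0:ℝ) L, f (c.1, y, c.2) := by
    have hh : Continuous fun q : (ℝ × ℝ) × ℝ => f (q.1.1, q.2, q.1.2) := by fun_prop
    exact contParamI hh isCompact_Icc
  have hint : Integrable (fun c : ℝ × ℝ => ∫ y in Icc (0:ℝ) L, f (c.1, y, c.2))
      ((volume.restrict (Icc (0:ℝ) L)).prod (volume.restrict (Icc (0:ℝ) 1))) := by
    rw [← h2]; exact intOn hcont (isCompact_Icc.prod isCompact_Icc)
  rw [fubini_std L hf]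
  calc ∫ c in Icc 0 L ×ˢ Icc (0:ℝ) 1, ∫ y in Icc (0:ℝ) L, f (c.1, y, c.2)
      = ∫ x in Icc (0:ℝ) L, ∫ z in Icc (0:ℝ) 1, ∫ y in Icc (0:ℝ) L, f (x, y, z) := by
        rw [h2]; exact integral_prod _ hint
    _ = ∫ x in Icc (0:ℝ) L, ∫ y in Icc (0:ℝ) L, ∫ z in Icc (0:ℝ) 1, f (x, y, z) := by
        refine setIntegral_congr_fun measurableSet_Icc fun x _ => ?_
        have hswap : Integrable (Function.uncurry fun z y => f (x, y, z))
            ((volume.restrict (Icc (0:ℝ) 1)).prod (volume.restrict (Icc (0:ℝ) L))) := by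
          rw [← restrict_prod_eq]
          have hu : Continuous (Function.uncurry fun z y => f (x, y, z)) := by
            have : Continuous fun q : ℝ × ℝ => f (x, q.2, q.1) := by fun_prop
            exact this
          exact intOn hu (isCompact_Icc.prod isCompact_Icc)
        exact integral_integral_swap hswap

lemma fubini_g3 (L : ℝ) {f : ℝ × ℝ × ℝ → ℝ} (hf : Continuous f) :
    ∫ c in Icc 0 L ×ˢ Icc (0:ℝ) L, ∫ z in Icc (0:ℝ) 1, f (c.1, c.2, z) = ∫ p in Box L, f p := by
  have h2 : volume.restrict (Icc 0 L ×ˢ Icc (0:ℝ) L)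
      = (volume.restrict (Icc (0:ℝ) L)).prod (volume.restrict (Icc (0:ℝ) L)) :=
    restrict_prod_eq _ _
  have hcont : Continuous fun c : ℝ × ℝ => ∫ z in Icc (0:ℝ) 1, f (c.1, c.2, z) := by
    have hh : Continuous fun q : (ℝ × ℝ) × ℝ => f (q.1.1, q.1.2, q.2) := by fun_prop
    exact contParamI hh isCompact_Icc
  have hint : Integrable (fun c : ℝ × ℝ => ∫ z in Icc (0:ℝ) 1, f (c.1, c.2, z))
      ((volume.restrict (Icc (0:ℝ) L)).prod (volume.restrict (Icc (0:ℝ) L))) := by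
    rw [← h2]; exact intOn hcont (isCompact_Icc.prod isCompact_Icc)
  rw [fubini_std L hf]
  rw [h2]
  exact integral_prod _ hint

lemma gagliardo (L : ℝ) (hL : 0 < L) (g₁ g₂ g₃ : ℝ × ℝ → ℝ)
    (h1c : Continuous g₁) (h2c : Continuous g₂) (h3c : Continuous g₃)
    (h10 : ∀ c, 0 ≤ g₁ c) (h20 : ∀ c, 0 ≤ g₂ c) (h30 : ∀ c, 0 ≤ g₃ c) :
    ∫ p in Box L, √(g₁ p.2) * (√(g₂ (p.1, p.2.2)) * √(g₃ (p.1, p.2.1)))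
      ≤ √(∫ c in Icc 0 L ×ˢ Icc (0:ℝ) 1, g₁ c) * (√(∫ c in Icc 0 L ×ˢ Icc (0:ℝ) 1, g₂ c)
        * √(∫ c in Icc 0 L ×ˢ Icc (0:ℝ) L, g₃ c)) := by
  have hIc : IsCompact (Icc (0:ℝ) L) := isCompact_Icc
  have hJc : IsCompact (Icc (0:ℝ) 1) := isCompact_Icc
  set F : ℝ × ℝ × ℝ → ℝ :=
    fun p => √(g₁ p.2) * (√(g₂ (p.1, p.2.2)) * √(g₃ (p.1, p.2.1))) with hF
  have hFc : Continuous F := by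
    apply Continuous.mul
    · exact Real.continuous_sqrt.comp (h1c.comp continuous_snd)
    · apply Continuous.mul
      · exact Real.continuous_sqrt.comp (h2c.comp (by fun_prop))
      · exact Real.continuous_sqrt.comp (h3c.comp (by fun_prop))
  set Φ₂ : ℝ → ℝ := fun z => ∫ x in Icc (0:ℝ) L, g₂ (x, z) with hΦ₂
  set Φ₃ : ℝ → ℝ := fun y => ∫ x in Icc (0:ℝ) L, g₃ (x, y) with hΦ₃
  set Ψ₁ : ℝ → ℝ := fun y => ∫ z in Icc (0:ℝ) 1, g₁ (y, z) with hΨ₁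
  set K₂ : ℝ := ∫ z in Icc (0:ℝ) 1, Φ₂ z with hK₂
  have hΦ₂c : Continuous Φ₂ := by
    have hh : Continuous fun q : ℝ × ℝ => g₂ (q.2, q.1) := h2c.comp (by fun_prop)
    exact contParamR hh hIc
  have hΦ₃c : Continuous Φ₃ := by
    have hh : Continuous fun q : ℝ × ℝ => g₃ (q.2, q.1) := h3c.comp (by fun_prop)
    exact contParamR hh hIc
  have hΨ₁c : Continuous Ψ₁ := by
    have hh : Continuous fun q : ℝ × ℝ => g₁ (q.1, q.2) := by fun_prop
    exact contParamR hh hJc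
  have hΦ₂0 : ∀ z, 0 ≤ Φ₂ z := fun z =>
    setIntegral_nonneg measurableSet_Icc fun x _ => h20 _
  have hΦ₃0 : ∀ y, 0 ≤ Φ₃ y := fun y =>
    setIntegral_nonneg measurableSet_Icc fun x _ => h30 _
  have hΨ₁0 : ∀ y, 0 ≤ Ψ₁ y := fun y =>
    setIntegral_nonneg measurableSet_Icc fun z _ => h10 _
  have hK₂0 : 0 ≤ K₂ := setIntegral_nonneg measurableSet_Icc fun z _ => hΦ₂0 _
  -- inner Cauchy-Schwarz in x
  have hinner : ∀ w : ℝ × ℝ, (∫ x in Icc (0:ℝ) L, F (x, w))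
      ≤ √(g₁ w) * (√(Φ₂ w.2) * √(Φ₃ w.1)) := by
    intro w
    have e1 : (∫ x in Icc (0:ℝ) L, F (x, w))
        = √(g₁ w) * ∫ x in Icc (0:ℝ) L, √(g₂ (x, w.2)) * √(g₃ (x, w.1)) := by
      rw [← integral_const_mul]
    rw [e1]
    refine mul_le_mul_of_nonneg_left ?_ (Real.sqrt_nonneg _)
    have hcs := CS_set hIc (f := fun x => √(g₂ (x, w.2))) (g := fun x => √(g₃ (x, w.1)))
      (Real.continuous_sqrt.comp (h2c.comp (by fun_prop)))
      (Real.continuous_sqrt.comp (h3c.comp (by fun_prop)))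
      (fun x => Real.sqrt_nonneg _) (fun x => Real.sqrt_nonneg _)
    calc ∫ x in Icc (0:ℝ) L, √(g₂ (x, w.2)) * √(g₃ (x, w.1)) ≤
        √(∫ x in Icc (0:ℝ) L, √(g₂ (x, w.2)) ^ 2) * √(∫ x in Icc (0:ℝ) L, √(g₃ (x, w.1)) ^ 2) :=
          hcs
      _ = √(Φ₂ w.2) * √(Φ₃ w.1) := by
          congr 1
          · congr 1
            exact setIntegral_congr_fun measurableSet_Icc fun x _ => Real.sq_sqrt (h20 _)
          · congr 1
            exact setIntegral_congr_fun measurableSet_Icc fun x _ => Real.sq_sqrt (h30 _)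
  -- continuity of the marginal of F
  have hMargc : Continuous fun w : ℝ × ℝ => ∫ x in Icc (0:ℝ) L, F (x, w) := by
    have hh : Continuous fun q : (ℝ × ℝ) × ℝ => F (q.2, q.1) := hFc.comp (by fun_prop)
    exact contParamI hh hIc
  have step1 : ∫ p in Box L, F p
      ≤ ∫ w in Icc 0 L ×ˢ Icc (0:ℝ) 1, √(g₁ w) * (√(Φ₂ w.2) * √(Φ₃ w.1)) := by
    rw [← fubini_g1 L hFc]
    refine setIntegral_mono_on ?_ ?_ (measurableSet_Icc.prod measurableSet_Icc)
      (fun w _ => hinner w)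
    · exact intOn hMargc (hIc.prod hJc)
    · refine intOn ?_ (hIc.prod hJc)
      exact (Real.continuous_sqrt.comp h1c).mul
        ((Real.continuous_sqrt.comp (hΦ₂c.comp continuous_snd)).mul
          (Real.continuous_sqrt.comp (hΦ₃c.comp continuous_fst)))
  -- split the square integral
  have step2 : ∫ w in Icc 0 L ×ˢ Icc (0:ℝ) 1, √(g₁ w) * (√(Φ₂ w.2) * √(Φ₃ w.1))
      = ∫ y in Icc (0:ℝ) L, ∫ z in Icc (0:ℝ) 1, √(g₁ (y, z)) * (√(Φ₂ z) * √(Φ₃ y)) := by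
    rw [restrict_prod_eq]
    refine integral_prod _ ?_
    rw [← restrict_prod_eq]
    refine intOn ?_ (hIc.prod hJc)
    exact (Real.continuous_sqrt.comp h1c).mul
      ((Real.continuous_sqrt.comp (hΦ₂c.comp continuous_snd)).mul
        (Real.continuous_sqrt.comp (hΦ₃c.comp continuous_fst)))
  -- Cauchy-Schwarz in z for fixed y
  have hinner2 : ∀ y : ℝ, (∫ z in Icc (0:ℝ) 1, √(g₁ (y, z)) * (√(Φ₂ z) * √(Φ₃ y)))
      ≤ √(Φ₃ y) * (√(Ψ₁ y) * √K₂) := by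
    intro y
    have e1 : (∫ z in Icc (0:ℝ) 1, √(g₁ (y, z)) * (√(Φ₂ z) * √(Φ₃ y)))
        = √(Φ₃ y) * ∫ z in Icc (0:ℝ) 1, √(g₁ (y, z)) * √(Φ₂ z) := by
      rw [← integral_const_mul]
      exact setIntegral_congr_fun measurableSet_Icc fun z _ => by ring
    rw [e1]
    refine mul_le_mul_of_nonneg_left ?_ (Real.sqrt_nonneg _)
    have hcs := CS_set hJc (f := fun z => √(g₁ (y, z))) (g := fun z => √(Φ₂ z))
      (Real.continuous_sqrt.comp (h1c.comp (by fun_prop)))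
      (Real.continuous_sqrt.comp hΦ₂c)
      (fun z => Real.sqrt_nonneg _) (fun z => Real.sqrt_nonneg _)
    calc ∫ z in Icc (0:ℝ) 1, √(g₁ (y, z)) * √(Φ₂ z) ≤
        √(∫ z in Icc (0:ℝ) 1, √(g₁ (y, z)) ^ 2) * √(∫ z in Icc (0:ℝ) 1, √(Φ₂ z) ^ 2) := hcs
      _ = √(Ψ₁ y) * √K₂ := by
          congr 1
          · congr 1
            exact setIntegral_congr_fun measurableSet_Icc fun z _ => Real.sq_sqrt (h10 _)
          · congr 1
            exact setIntegral_congr_fun measurableSet_Icc fun z _ => Real.sq_sqrt (hΦ₂0 _)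
  have step3 : ∫ y in Icc (0:ℝ) L, (∫ z in Icc (0:ℝ) 1, √(g₁ (y, z)) * (√(Φ₂ z) * √(Φ₃ y)))
      ≤ ∫ y in Icc (0:ℝ) L, √(Φ₃ y) * (√(Ψ₁ y) * √K₂) := by
    refine setIntegral_mono_on ?_ ?_ measurableSet_Icc (fun y _ => hinner2 y)
    · refine intOn ?_ hIc
      have hh : Continuous fun q : ℝ × ℝ => √(g₁ (q.1, q.2)) * (√(Φ₂ q.2) * √(Φ₃ q.1)) := by
        exact (Real.continuous_sqrt.comp (by fun_prop)).mul
          ((Real.continuous_sqrt.comp (hΦ₂c.comp continuous_snd)).mul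
            (Real.continuous_sqrt.comp (hΦ₃c.comp continuous_fst)))
      exact contParamR hh hJc
    · refine intOn ?_ hIc
      exact (Real.continuous_sqrt.comp hΦ₃c).mul
        (((Real.continuous_sqrt.comp hΨ₁c).mul continuous_const))
  -- final Cauchy-Schwarz in y
  have step4 : ∫ y in Icc (0:ℝ) L, √(Φ₃ y) * (√(Ψ₁ y) * √K₂)
      ≤ √K₂ * (√(∫ y in Icc (0:ℝ) L, Φ₃ y) * √(∫ y in Icc (0:ℝ) L, Ψ₁ y)) := by
    have e1 : ∫ y in Icc (0:ℝ) L, √(Φ₃ y) * (√(Ψ₁ y) * √K₂)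
        = √K₂ * ∫ y in Icc (0:ℝ) L, √(Φ₃ y) * √(Ψ₁ y) := by
      rw [← integral_const_mul]
      exact setIntegral_congr_fun measurableSet_Icc fun y _ => by ring
    rw [e1]
    refine mul_le_mul_of_nonneg_left ?_ (Real.sqrt_nonneg _)
    have hcs := CS_set hIc (f := fun y => √(Φ₃ y)) (g := fun y => √(Ψ₁ y))
      (Real.continuous_sqrt.comp hΦ₃c) (Real.continuous_sqrt.comp hΨ₁c)
      (fun y => Real.sqrt_nonneg _) (fun y => Real.sqrt_nonneg _)
    calc ∫ y in Icc (0:ℝ) L, √(Φ₃ y) * √(Ψ₁ y) ≤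
        √(∫ y in Icc (0:ℝ) L, √(Φ₃ y) ^ 2) * √(∫ y in Icc (0:ℝ) L, √(Ψ₁ y) ^ 2) := hcs
      _ = √(∫ y in Icc (0:ℝ) L, Φ₃ y) * √(∫ y in Icc (0:ℝ) L, Ψ₁ y) := by
          congr 1
          · congr 1
            exact setIntegral_congr_fun measurableSet_Icc fun y _ => Real.sq_sqrt (hΦ₃0 _)
          · congr 1
            exact setIntegral_congr_fun measurableSet_Icc fun y _ => Real.sq_sqrt (hΨ₁0 _)
  -- identifications
  have hId1 : ∫ y in Icc (0:ℝ) L, Ψ₁ y = ∫ c in Icc 0 L ×ˢ Icc (0:ℝ) 1, g₁ c := by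
    rw [restrict_prod_eq]
    exact (integral_prod _ (by rw [← restrict_prod_eq]; exact intOn h1c (hIc.prod hJc))).symm
  have hId2 : K₂ = ∫ c in Icc 0 L ×ˢ Icc (0:ℝ) 1, g₂ c := by
    rw [restrict_prod_eq]
    exact (integral_prod_symm _ (by rw [← restrict_prod_eq]; exact intOn h2c (hIc.prod hJc))).symm
  have hId3 : ∫ y in Icc (0:ℝ) L, Φ₃ y = ∫ c in Icc 0 L ×ˢ Icc (0:ℝ) L, g₃ c := by
    rw [restrict_prod_eq]
    exact (integral_prod_symm _ (by rw [← restrict_prod_eq]; exact intOn h3c (hIc.prod hIc))).symm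
  calc ∫ p in Box L, F p
      ≤ ∫ w in Icc 0 L ×ˢ Icc (0:ℝ) 1, √(g₁ w) * (√(Φ₂ w.2) * √(Φ₃ w.1)) := step1
    _ = ∫ y in Icc (0:ℝ) L, ∫ z in Icc (0:ℝ) 1, √(g₁ (y, z)) * (√(Φ₂ z) * √(Φ₃ y)) := step2
    _ ≤ ∫ y in Icc (0:ℝ) L, √(Φ₃ y) * (√(Ψ₁ y) * √K₂) := step3
    _ ≤ √K₂ * (√(∫ y in Icc (0:ℝ) L, Φ₃ y) * √(∫ y in Icc (0:ℝ) L, Ψ₁ y)) := step4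
    _ = √(∫ c in Icc 0 L ×ˢ Icc (0:ℝ) 1, g₁ c) * (√(∫ c in Icc 0 L ×ˢ Icc (0:ℝ) 1, g₂ c)
        * √(∫ c in Icc 0 L ×ˢ Icc (0:ℝ) L, g₃ c)) := by
          rw [hId1, hId2, hId3]; ring

lemma div_trick {l x y u : ℝ} (hl : 0 < l) (h : l * u ≤ x + l * y) : u ≤ (1/l) * x + y := by
  rw [← mul_le_mul_iff_right₀ hl]
  calc l * u ≤ x + l * y := h
    _ = l * ((1/l) * x + y) := by field_simp

def gg1 (L : ℝ) (φ : ℝ × ℝ × ℝ → ℝ) (c : ℝ × ℝ) : ℝ :=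
  (1/L) * (∫ x in Icc (0:ℝ) L, φ (x, c) ^ 4)
    + ∫ x in Icc (0:ℝ) L, |4 * φ (x, c) ^ 3 * pdx φ (x, c)|

def gg2 (L : ℝ) (φ : ℝ × ℝ × ℝ → ℝ) (c : ℝ × ℝ) : ℝ :=
  (1/L) * (∫ y in Icc (0:ℝ) L, φ (c.1, y, c.2) ^ 4)
    + ∫ y in Icc (0:ℝ) L, |4 * φ (c.1, y, c.2) ^ 3 * pdy φ (c.1, y, c.2)|

def gg3 (L : ℝ) (φ : ℝ × ℝ × ℝ → ℝ) (c : ℝ × ℝ) : ℝ :=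
  (∫ z in Icc (0:ℝ) 1, φ (c.1, c.2, z) ^ 4)
    + ∫ z in Icc (0:ℝ) 1, |4 * φ (c.1, c.2, z) ^ 3 * pdz φ (c.1, c.2, z)|

section ggprops

variable {L : ℝ} {φ : ℝ × ℝ × ℝ → ℝ}

lemma gg1_cont (hφ : ContDiff ℝ (⊤ : ℕ∞) φ) : Continuous (gg1 L φ) := by
  have h1 : Continuous φ := hφ.continuous
  have h2 : Continuous (pdx φ) := contPdx hφ
  have hm : Continuous fun q : (ℝ × ℝ) × ℝ => ((q.2, q.1) : ℝ × ℝ × ℝ) := by fun_prop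
  refine Continuous.add (continuous_const.mul ?_) ?_
  · exact contParamI (h := fun q : (ℝ × ℝ) × ℝ => φ (q.2, q.1) ^ 4)
      ((h1.comp hm).pow 4) isCompact_Icc
  · exact contParamI (h := fun q : (ℝ × ℝ) × ℝ => |4 * φ (q.2, q.1) ^ 3 * pdx φ (q.2, q.1)|)
      (((continuous_const.mul ((h1.comp hm).pow 3)).mul (h2.comp hm)).abs) isCompact_Icc

lemma gg2_cont (hφ : ContDiff ℝ (⊤ : ℕ∞) φ) : Continuous (gg2 L φ) := by
  have h1 : Continuous φ := hφ.continuous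
  have h2 : Continuous (pdy φ) := contPdy hφ
  have hm : Continuous fun q : (ℝ × ℝ) × ℝ => ((q.1.1, q.2, q.1.2) : ℝ × ℝ × ℝ) := by fun_prop
  refine Continuous.add (continuous_const.mul ?_) ?_
  · exact contParamI (h := fun q : (ℝ × ℝ) × ℝ => φ (q.1.1, q.2, q.1.2) ^ 4)
      ((h1.comp hm).pow 4) isCompact_Icc
  · exact contParamI
      (h := fun q : (ℝ × ℝ) × ℝ => |4 * φ (q.1.1, q.2, q.1.2) ^ 3 * pdy φ (q.1.1, q.2, q.1.2)|)
      (((continuous_const.mul ((h1.comp hm).pow 3)).mul (h2.comp hm)).abs) isCompact_Icc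

lemma gg3_cont (hφ : ContDiff ℝ (⊤ : ℕ∞) φ) : Continuous (gg3 L φ) := by
  have h1 : Continuous φ := hφ.continuous
  have h2 : Continuous (pdz φ) := contPdz hφ
  have hm : Continuous fun q : (ℝ × ℝ) × ℝ => ((q.1.1, q.1.2, q.2) : ℝ × ℝ × ℝ) := by fun_prop
  refine Continuous.add ?_ ?_
  · exact contParamI (h := fun q : (ℝ × ℝ) × ℝ => φ (q.1.1, q.1.2, q.2) ^ 4)
      ((h1.comp hm).pow 4) isCompact_Icc
  · exact contParamI
      (h := fun q : (ℝ × ℝ) × ℝ => |4 * φ (q.1.1, q.1.2, q.2) ^ 3 * pdz φ (q.1.1, q.1.2, q.2)|)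
      (((continuous_const.mul ((h1.comp hm).pow 3)).mul (h2.comp hm)).abs) isCompact_Icc

lemma gg1_nonneg (hL : 0 < L) (c : ℝ × ℝ) : 0 ≤ gg1 L φ c := by
  refine add_nonneg (mul_nonneg (one_div_nonneg.mpr hL.le) ?_) ?_
  · exact setIntegral_nonneg measurableSet_Icc fun x _ => by positivity
  · exact setIntegral_nonneg measurableSet_Icc fun x _ => abs_nonneg _

lemma gg2_nonneg (hL : 0 < L) (c : ℝ × ℝ) : 0 ≤ gg2 L φ c := by
  refine add_nonneg (mul_nonneg (one_div_nonneg.mpr hL.le) ?_) ?_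
  · exact setIntegral_nonneg measurableSet_Icc fun x _ => by positivity
  · exact setIntegral_nonneg measurableSet_Icc fun x _ => abs_nonneg _

lemma gg3_nonneg (c : ℝ × ℝ) : 0 ≤ gg3 L φ c := by
  refine add_nonneg ?_ ?_
  · exact setIntegral_nonneg measurableSet_Icc fun x _ => by positivity
  · exact setIntegral_nonneg measurableSet_Icc fun x _ => abs_nonneg _

lemma le_gg1 (hL : 0 < L) (hφ : ContDiff ℝ (⊤ : ℕ∞) φ) {p : ℝ × ℝ × ℝ} (hp : p ∈ Box L) :
    φ p ^ 4 ≤ gg1 L φ p.2 := by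
  have hd := hφ.differentiable (by simp)
  have h1 : Continuous φ := hφ.continuous
  have h2 : Continuous (pdx φ) := contPdx hφ
  have hderiv : ∀ x : ℝ, HasDerivAt (fun s => φ (s, p.2) ^ 4)
      (4 * φ (x, p.2) ^ 3 * pdx φ (x, p.2)) x := by
    intro x
    have h := (sliceX hd p.2 x).pow 4
    norm_num at h
    exact h
  have hcont : Continuous fun x : ℝ => 4 * φ (x, p.2) ^ 3 * pdx φ (x, p.2) := by fun_prop
  have hmem := (Set.mem_prod.1 hp).1
  have hag := agmon1D hderiv hcont hL hmem
  simp only [sub_zero, Prod.mk.eta] at hag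
  have := div_trick hL hag
  simpa [gg1] using this

lemma le_gg2 (hL : 0 < L) (hφ : ContDiff ℝ (⊤ : ℕ∞) φ) {p : ℝ × ℝ × ℝ} (hp : p ∈ Box L) :
    φ p ^ 4 ≤ gg2 L φ (p.1, p.2.2) := by
  have hd := hφ.differentiable (by simp)
  have h1 : Continuous φ := hφ.continuous
  have h2 : Continuous (pdy φ) := contPdy hφ
  have hderiv : ∀ y : ℝ, HasDerivAt (fun s => φ (p.1, s, p.2.2) ^ 4)
      (4 * φ (p.1, y, p.2.2) ^ 3 * pdy φ (p.1, y, p.2.2)) y := by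
    intro y
    have h := (sliceY hd (p.1, p.2.2) y).pow 4
    norm_num at h
    exact h
  have hcont : Continuous fun y : ℝ => 4 * φ (p.1, y, p.2.2) ^ 3 * pdy φ (p.1, y, p.2.2) := by
    fun_prop
  have hmem := (Set.mem_prod.1 (Set.mem_prod.1 hp).2).1
  have hag := agmon1D hderiv hcont hL hmem
  simp only [sub_zero, Prod.mk.eta] at hag
  have := div_trick hL hag
  simpa [gg2, Prod.mk.eta] using this

lemma le_gg3 (hL : 0 < L) (hφ : ContDiff ℝ (⊤ : ℕ∞) φ) {p : ℝ × ℝ × ℝ} (hp : p ∈ Box L) :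
    φ p ^ 4 ≤ gg3 L φ (p.1, p.2.1) := by
  have hd := hφ.differentiable (by simp)
  have h1 : Continuous φ := hφ.continuous
  have h2 : Continuous (pdz φ) := contPdz hφ
  have hderiv : ∀ z : ℝ, HasDerivAt (fun s => φ (p.1, p.2.1, s) ^ 4)
      (4 * φ (p.1, p.2.1, z) ^ 3 * pdz φ (p.1, p.2.1, z)) z := by
    intro z
    have h := (sliceZ hd (p.1, p.2.1) z).pow 4
    norm_num at h
    exact h
  have hcont : Continuous fun z : ℝ => 4 * φ (p.1, p.2.1, z) ^ 3 * pdz φ (p.1, p.2.1, z) := by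
    fun_prop
  have hmem := (Set.mem_prod.1 (Set.mem_prod.1 hp).2).2
  have hag := agmon1D hderiv hcont one_pos hmem
  simp only [sub_zero, Prod.mk.eta, one_mul] at hag
  simpa [gg3, Prod.mk.eta] using hag

end ggprops

lemma sqrt_sixteen_mul (X : ℝ) : √(16 * X) = 4 * √X := by
  rw [Real.sqrt_mul (by norm_num : (0:ℝ) ≤ 16),
    show (16:ℝ) = 4 ^ 2 by norm_num, Real.sqrt_sq (by norm_num : (0:ℝ) ≤ 4)]

section intgg

variable {L : ℝ} {φ : ℝ × ℝ × ℝ → ℝ}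

/-- The Cauchy–Schwarz bound for `∫ φ^4` over the box. -/
lemma int_pow4 (hφ : ContDiff ℝ (⊤ : ℕ∞) φ) (L : ℝ) :
    ∫ p in Box L, φ p ^ 4
      ≤ √(∫ p in Box L, φ p ^ 2) * √(∫ p in Box L, φ p ^ 6) := by
  have h1 : Continuous φ := hφ.continuous
  have e1 : ∫ p in Box L, φ p ^ 4 = ∫ p in Box L, |φ p| * |φ p| ^ 3 := by
    refine setIntegral_congr_fun (measurableSet_Icc.prod
      (measurableSet_Icc.prod measurableSet_Icc)) fun p _ => ?_
    rw [show |φ p| * |φ p| ^ 3 = |φ p| ^ 4 by ring, ← abs_pow, abs_of_nonneg (by positivity)]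
  rw [e1]
  have hcs := CS_set (box_compact L) (f := fun p => |φ p|) (g := fun p => |φ p| ^ 3)
    (by fun_prop) (by fun_prop) (fun p => abs_nonneg _) (fun p => by positivity)
  calc ∫ p in Box L, |φ p| * |φ p| ^ 3
      ≤ √(∫ p in Box L, |φ p| ^ 2) * √(∫ p in Box L, (|φ p| ^ 3) ^ 2) := hcs
    _ = √(∫ p in Box L, φ p ^ 2) * √(∫ p in Box L, φ p ^ 6) := by
        congr 1
        · congr 1
          refine setIntegral_congr_fun (measurableSet_Icc.prod
            (measurableSet_Icc.prod measurableSet_Icc)) fun p _ => sq_abs _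
        · congr 1
          refine setIntegral_congr_fun (measurableSet_Icc.prod
            (measurableSet_Icc.prod measurableSet_Icc)) fun p _ => ?_
          rw [← pow_mul, ← abs_pow]
          show |φ p ^ 6| = φ p ^ 6
          exact abs_of_nonneg (by positivity)

/-- The Cauchy–Schwarz bound for `∫ |4 φ^3 ψ|` over the box. -/
lemma int_der (hφ : ContDiff ℝ (⊤ : ℕ∞) φ) {ψ : ℝ × ℝ × ℝ → ℝ} (hψ : Continuous ψ) (L : ℝ) :
    ∫ p in Box L, |4 * φ p ^ 3 * ψ p|
      ≤ √(∫ p in Box L, φ p ^ 6) * (4 * √(∫ p in Box L, ψ p ^ 2)) := by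
  have h1 : Continuous φ := hφ.continuous
  have e1 : ∫ p in Box L, |4 * φ p ^ 3 * ψ p| = ∫ p in Box L, |φ p| ^ 3 * (4 * |ψ p|) := by
    refine setIntegral_congr_fun (measurableSet_Icc.prod
      (measurableSet_Icc.prod measurableSet_Icc)) fun p _ => ?_
    rw [abs_mul, abs_mul, abs_pow, abs_of_nonneg (by norm_num : (0:ℝ) ≤ 4)]
    ring
  rw [e1]
  have hcs := CS_set (box_compact L) (f := fun p => |φ p| ^ 3) (g := fun p => 4 * |ψ p|)
    (by fun_prop) (by fun_prop) (fun p => by positivity) (fun p => by positivity)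
  calc ∫ p in Box L, |φ p| ^ 3 * (4 * |ψ p|)
      ≤ √(∫ p in Box L, (|φ p| ^ 3) ^ 2) * √(∫ p in Box L, (4 * |ψ p|) ^ 2) := hcs
    _ = √(∫ p in Box L, φ p ^ 6) * (4 * √(∫ p in Box L, ψ p ^ 2)) := by
        congr 1
        · congr 1
          refine setIntegral_congr_fun (measurableSet_Icc.prod
            (measurableSet_Icc.prod measurableSet_Icc)) fun p _ => ?_
          rw [← pow_mul, ← abs_pow]
          show |φ p ^ 6| = φ p ^ 6
          exact abs_of_nonneg (by positivity)
        · rw [show ∫ p in Box L, (4 * |ψ p|) ^ 2 = ∫ p in Box L, 16 * ψ p ^ 2 from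
            setIntegral_congr_fun (measurableSet_Icc.prod
              (measurableSet_Icc.prod measurableSet_Icc)) fun p _ => by
                rw [mul_pow, sq_abs]; norm_num]
          rw [MeasureTheory.integral_const_mul, sqrt_sixteen_mul]

lemma int_gg1 (hL : 0 < L) (hφ : ContDiff ℝ (⊤ : ℕ∞) φ) :
    ∫ c in Icc 0 L ×ˢ Icc (0:ℝ) 1, gg1 L φ c
      ≤ (4 + 1/L) * √(∫ p in Box L, φ p ^ 6)
        * (√(∫ p in Box L, φ p ^ 2) + √(∫ p in Box L, pdx φ p ^ 2)) := by
  have h1 : Continuous φ := hφ.continuous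
  have h2 : Continuous (pdx φ) := contPdx hφ
  have hc4 : Continuous fun p : ℝ × ℝ × ℝ => φ p ^ 4 := by fun_prop
  have hcd : Continuous fun p : ℝ × ℝ × ℝ => |4 * φ p ^ 3 * pdx φ p| := by fun_prop
  have hm : Continuous fun q : (ℝ × ℝ) × ℝ => ((q.2, q.1) : ℝ × ℝ × ℝ) := by fun_prop
  have hca : Continuous fun c : ℝ × ℝ => ∫ x in Icc (0:ℝ) L, φ (x, c) ^ 4 :=
    contParamI (h := fun q : (ℝ × ℝ) × ℝ => φ (q.2, q.1) ^ 4) ((h1.comp hm).pow 4) isCompact_Icc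
  have hcb : Continuous fun c : ℝ × ℝ =>
      ∫ x in Icc (0:ℝ) L, |4 * φ (x, c) ^ 3 * pdx φ (x, c)| :=
    contParamI (h := fun q : (ℝ × ℝ) × ℝ => |4 * φ (q.2, q.1) ^ 3 * pdx φ (q.2, q.1)|)
      (hcd.comp hm) isCompact_Icc
  have hsplit : ∫ c in Icc 0 L ×ˢ Icc (0:ℝ) 1, gg1 L φ c
      = (1/L) * (∫ p in Box L, φ p ^ 4) + ∫ p in Box L, |4 * φ p ^ 3 * pdx φ p| := by
    rw [← fubini_g1 L hc4, ← fubini_g1 L hcd]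
    simp only [gg1]
    rw [integral_add (intOn (f := fun c : ℝ × ℝ => 1/L * ∫ x in Icc (0:ℝ) L, φ (x, c) ^ 4)
        (continuous_const.mul hca) (isCompact_Icc.prod isCompact_Icc))
      (intOn hcb (isCompact_Icc.prod isCompact_Icc)), MeasureTheory.integral_const_mul]
  rw [hsplit]
  calc (1/L) * (∫ p in Box L, φ p ^ 4) + ∫ p in Box L, |4 * φ p ^ 3 * pdx φ p|
      ≤ (1/L) * (√(∫ p in Box L, φ p ^ 2) * √(∫ p in Box L, φ p ^ 6))
        + √(∫ p in Box L, φ p ^ 6) * (4 * √(∫ p in Box L, pdx φ p ^ 2)) :=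
        add_le_add (mul_le_mul_of_nonneg_left (int_pow4 hφ L) (one_div_nonneg.mpr hL.le))
          (int_der hφ h2 L)
    _ ≤ (4 + 1/L) * √(∫ p in Box L, φ p ^ 6)
        * (√(∫ p in Box L, φ p ^ 2) + √(∫ p in Box L, pdx φ p ^ 2)) := by
        have ha := Real.sqrt_nonneg (∫ p in Box L, φ p ^ 2)
        have hs := Real.sqrt_nonneg (∫ p in Box L, φ p ^ 6)
        have hd := Real.sqrt_nonneg (∫ p in Box L, pdx φ p ^ 2)
        have hi := one_div_nonneg.mpr hL.le
        nlinarith [mul_nonneg hs ha, mul_nonneg hi (mul_nonneg hs hd)]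

lemma int_gg2 (hL : 0 < L) (hφ : ContDiff ℝ (⊤ : ℕ∞) φ) :
    ∫ c in Icc 0 L ×ˢ Icc (0:ℝ) 1, gg2 L φ c
      ≤ (4 + 1/L) * √(∫ p in Box L, φ p ^ 6)
        * (√(∫ p in Box L, φ p ^ 2) + √(∫ p in Box L, pdy φ p ^ 2)) := by
  have h1 : Continuous φ := hφ.continuous
  have h2 : Continuous (pdy φ) := contPdy hφ
  have hc4 : Continuous fun p : ℝ × ℝ × ℝ => φ p ^ 4 := by fun_prop
  have hcd : Continuous fun p : ℝ × ℝ × ℝ => |4 * φ p ^ 3 * pdy φ p| := by fun_prop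
  have hm : Continuous fun q : (ℝ × ℝ) × ℝ => ((q.1.1, q.2, q.1.2) : ℝ × ℝ × ℝ) := by fun_prop
  have hca : Continuous fun c : ℝ × ℝ => ∫ y in Icc (0:ℝ) L, φ (c.1, y, c.2) ^ 4 :=
    contParamI (h := fun q : (ℝ × ℝ) × ℝ => φ (q.1.1, q.2, q.1.2) ^ 4)
      ((h1.comp hm).pow 4) isCompact_Icc
  have hcb : Continuous fun c : ℝ × ℝ =>
      ∫ y in Icc (0:ℝ) L, |4 * φ (c.1, y, c.2) ^ 3 * pdy φ (c.1, y, c.2)| :=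
    contParamI
      (h := fun q : (ℝ × ℝ) × ℝ => |4 * φ (q.1.1, q.2, q.1.2) ^ 3 * pdy φ (q.1.1, q.2, q.1.2)|)
      (hcd.comp hm) isCompact_Icc
  have hsplit : ∫ c in Icc 0 L ×ˢ Icc (0:ℝ) 1, gg2 L φ c
      = (1/L) * (∫ p in Box L, φ p ^ 4) + ∫ p in Box L, |4 * φ p ^ 3 * pdy φ p| := by
    rw [← fubini_g2 L hc4, ← fubini_g2 L hcd]
    simp only [gg2]
    rw [integral_add (intOn (f := fun c : ℝ × ℝ => 1/L * ∫ y in Icc (0:ℝ) L, φ (c.1, y, c.2) ^ 4)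
        (continuous_const.mul hca) (isCompact_Icc.prod isCompact_Icc))
      (intOn hcb (isCompact_Icc.prod isCompact_Icc)), MeasureTheory.integral_const_mul]
  rw [hsplit]
  calc (1/L) * (∫ p in Box L, φ p ^ 4) + ∫ p in Box L, |4 * φ p ^ 3 * pdy φ p|
      ≤ (1/L) * (√(∫ p in Box L, φ p ^ 2) * √(∫ p in Box L, φ p ^ 6))
        + √(∫ p in Box L, φ p ^ 6) * (4 * √(∫ p in Box L, pdy φ p ^ 2)) :=
        add_le_add (mul_le_mul_of_nonneg_left (int_pow4 hφ L) (one_div_nonneg.mpr hL.le))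
          (int_der hφ h2 L)
    _ ≤ (4 + 1/L) * √(∫ p in Box L, φ p ^ 6)
        * (√(∫ p in Box L, φ p ^ 2) + √(∫ p in Box L, pdy φ p ^ 2)) := by
        have ha := Real.sqrt_nonneg (∫ p in Box L, φ p ^ 2)
        have hs := Real.sqrt_nonneg (∫ p in Box L, φ p ^ 6)
        have hd := Real.sqrt_nonneg (∫ p in Box L, pdy φ p ^ 2)
        have hi := one_div_nonneg.mpr hL.le
        nlinarith [mul_nonneg hs ha, mul_nonneg hi (mul_nonneg hs hd)]

lemma int_gg3 (hL : 0 < L) (hφ : ContDiff ℝ (⊤ : ℕ∞) φ) :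
    ∫ c in Icc 0 L ×ˢ Icc (0:ℝ) L, gg3 L φ c
      ≤ (4 + 1/L) * √(∫ p in Box L, φ p ^ 6)
        * (√(∫ p in Box L, φ p ^ 2) + √(∫ p in Box L, pdz φ p ^ 2)) := by
  have h1 : Continuous φ := hφ.continuous
  have h2 : Continuous (pdz φ) := contPdz hφ
  have hc4 : Continuous fun p : ℝ × ℝ × ℝ => φ p ^ 4 := by fun_prop
  have hcd : Continuous fun p : ℝ × ℝ × ℝ => |4 * φ p ^ 3 * pdz φ p| := by fun_prop
  have hm : Continuous fun q : (ℝ × ℝ) × ℝ => ((q.1.1, q.1.2, q.2) : ℝ × ℝ × ℝ) := by fun_prop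
  have hca : Continuous fun c : ℝ × ℝ => ∫ z in Icc (0:ℝ) 1, φ (c.1, c.2, z) ^ 4 :=
    contParamI (h := fun q : (ℝ × ℝ) × ℝ => φ (q.1.1, q.1.2, q.2) ^ 4)
      ((h1.comp hm).pow 4) isCompact_Icc
  have hcb : Continuous fun c : ℝ × ℝ =>
      ∫ z in Icc (0:ℝ) 1, |4 * φ (c.1, c.2, z) ^ 3 * pdz φ (c.1, c.2, z)| :=
    contParamI
      (h := fun q : (ℝ × ℝ) × ℝ => |4 * φ (q.1.1, q.1.2, q.2) ^ 3 * pdz φ (q.1.1, q.1.2, q.2)|)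
      (hcd.comp hm) isCompact_Icc
  have hsplit : ∫ c in Icc 0 L ×ˢ Icc (0:ℝ) L, gg3 L φ c
      = (∫ p in Box L, φ p ^ 4) + ∫ p in Box L, |4 * φ p ^ 3 * pdz φ p| := by
    rw [← fubini_g3 L hc4, ← fubini_g3 L hcd]
    simp only [gg3]
    rw [integral_add (intOn hca (isCompact_Icc.prod isCompact_Icc))
      (intOn hcb (isCompact_Icc.prod isCompact_Icc))]
  rw [hsplit]
  calc (∫ p in Box L, φ p ^ 4) + ∫ p in Box L, |4 * φ p ^ 3 * pdz φ p|
      ≤ (√(∫ p in Box L, φ p ^ 2) * √(∫ p in Box L, φ p ^ 6))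
        + √(∫ p in Box L, φ p ^ 6) * (4 * √(∫ p in Box L, pdz φ p ^ 2)) :=
        add_le_add (int_pow4 hφ L) (int_der hφ h2 L)
    _ ≤ (4 + 1/L) * √(∫ p in Box L, φ p ^ 6)
        * (√(∫ p in Box L, φ p ^ 2) + √(∫ p in Box L, pdz φ p ^ 2)) := by
        have ha := Real.sqrt_nonneg (∫ p in Box L, φ p ^ 2)
        have hs := Real.sqrt_nonneg (∫ p in Box L, φ p ^ 6)
        have hd := Real.sqrt_nonneg (∫ p in Box L, pdz φ p ^ 2)
        have hi := one_div_nonneg.mpr hL.le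
        nlinarith [mul_nonneg hs ha, mul_nonneg hi (mul_nonneg hs hd),
          mul_nonneg hi (mul_nonneg hs ha)]

end intgg

lemma box_measurable (L : ℝ) : MeasurableSet (Box L) :=
  measurableSet_Icc.prod (measurableSet_Icc.prod measurableSet_Icc)

lemma core6 (L : ℝ) (hL : 0 < L) (φ : ℝ × ℝ × ℝ → ℝ) (hφ : ContDiff ℝ (⊤ : ℕ∞) φ) :
    ∫ p in Box L, φ p ^ 6 ≤ (4 + 1/L) ^ 6 *
      ((√(∫ p in Box L, φ p ^ 2) + √(∫ p in Box L, pdx φ p ^ 2)) *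
       ((√(∫ p in Box L, φ p ^ 2) + √(∫ p in Box L, pdy φ p ^ 2)) *
        (√(∫ p in Box L, φ p ^ 2) + √(∫ p in Box L, pdz φ p ^ 2)))) ^ 2 := by
  have h1 : Continuous φ := hφ.continuous
  set S := ∫ p in Box L, φ p ^ 6 with hSdef
  set E₁ := √(∫ p in Box L, φ p ^ 2) + √(∫ p in Box L, pdx φ p ^ 2) with hE₁
  set E₂ := √(∫ p in Box L, φ p ^ 2) + √(∫ p in Box L, pdy φ p ^ 2) with hE₂
  set E₃ := √(∫ p in Box L, φ p ^ 2) + √(∫ p in Box L, pdz φ p ^ 2) with hE₃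
  have hS0 : 0 ≤ S := setIntegral_nonneg (box_measurable L) fun p _ => by positivity
  have hE₁0 : 0 ≤ E₁ := add_nonneg (Real.sqrt_nonneg _) (Real.sqrt_nonneg _)
  have hE₂0 : 0 ≤ E₂ := add_nonneg (Real.sqrt_nonneg _) (Real.sqrt_nonneg _)
  have hE₃0 : 0 ≤ E₃ := add_nonneg (Real.sqrt_nonneg _) (Real.sqrt_nonneg _)
  set c : ℝ := 4 + 1/L with hc
  have hc0 : 0 < c := by rw [hc]; positivity
  set X₁ := ∫ w in Icc 0 L ×ˢ Icc (0:ℝ) 1, gg1 L φ w with hX₁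
  set X₂ := ∫ w in Icc 0 L ×ˢ Icc (0:ℝ) 1, gg2 L φ w with hX₂
  set X₃ := ∫ w in Icc 0 L ×ˢ Icc (0:ℝ) L, gg3 L φ w with hX₃
  have hX₁0 : 0 ≤ X₁ := setIntegral_nonneg (measurableSet_Icc.prod measurableSet_Icc)
    fun w _ => gg1_nonneg hL w
  have hX₂0 : 0 ≤ X₂ := setIntegral_nonneg (measurableSet_Icc.prod measurableSet_Icc)
    fun w _ => gg2_nonneg hL w
  have hX₃0 : 0 ≤ X₃ := setIntegral_nonneg (measurableSet_Icc.prod measurableSet_Icc)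
    fun w _ => gg3_nonneg w
  -- pointwise bound
  have hpt : ∀ p ∈ Box L, φ p ^ 6
      ≤ √(gg1 L φ p.2) * (√(gg2 L φ (p.1, p.2.2)) * √(gg3 L φ (p.1, p.2.1))) := by
    intro p hp
    have hb1 := le_gg1 hL hφ hp
    have hb2 := le_gg2 hL hφ hp
    have hb3 := le_gg3 hL hφ hp
    have h40 : (0:ℝ) ≤ φ p ^ 4 := by positivity
    calc φ p ^ 6 = √(φ p ^ 4 * (φ p ^ 4 * φ p ^ 4)) := by
          rw [show φ p ^ 4 * (φ p ^ 4 * φ p ^ 4) = (φ p ^ 6) ^ 2 by ring,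
            Real.sqrt_sq (by positivity)]
      _ ≤ √(gg1 L φ p.2 * (gg2 L φ (p.1, p.2.2) * gg3 L φ (p.1, p.2.1))) := by
          apply Real.sqrt_le_sqrt
          refine mul_le_mul hb1 ?_ (by positivity) (gg1_nonneg hL _)
          exact mul_le_mul hb2 hb3 h40 (gg2_nonneg hL _)
      _ = √(gg1 L φ p.2) * (√(gg2 L φ (p.1, p.2.2)) * √(gg3 L φ (p.1, p.2.1))) := by
          rw [Real.sqrt_mul (gg1_nonneg hL _), Real.sqrt_mul (gg2_nonneg hL _)]
  -- integrate the pointwise bound and apply Gagliardo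
  have hg1c := gg1_cont (L := L) hφ
  have hg2c := gg2_cont (L := L) hφ
  have hg3c := gg3_cont (L := L) hφ
  have hkey : S ≤ √X₁ * (√X₂ * √X₃) := by
    have hmono : S ≤ ∫ p in Box L,
        √(gg1 L φ p.2) * (√(gg2 L φ (p.1, p.2.2)) * √(gg3 L φ (p.1, p.2.1))) := by
      refine setIntegral_mono_on (intOn (by fun_prop) (box_compact L)) ?_
        (box_measurable L) hpt
      refine intOn ?_ (box_compact L)
      exact (Real.continuous_sqrt.comp (hg1c.comp continuous_snd)).mul
        ((Real.continuous_sqrt.comp (hg2c.comp (by fun_prop))).mul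
          (Real.continuous_sqrt.comp (hg3c.comp (by fun_prop))))
    refine hmono.trans ?_
    exact gagliardo L hL (gg1 L φ) (gg2 L φ) (gg3 L φ) hg1c hg2c hg3c
      (gg1_nonneg hL) (gg2_nonneg hL) (gg3_nonneg)
  have hb1 : X₁ ≤ c * √S * E₁ := int_gg1 hL hφ
  have hb2 : X₂ ≤ c * √S * E₂ := int_gg2 hL hφ
  have hb3 : X₃ ≤ c * √S * E₃ := int_gg3 hL hφ
  -- algebra
  rcases eq_or_lt_of_le hS0 with hS | hSpos
  · rw [← hS]; positivity
  have hsS := Real.sqrt_nonneg S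
  have hss : √S * √S = S := Real.mul_self_sqrt hS0
  have hrhs0 : 0 ≤ √X₁ * (√X₂ * √X₃) := by positivity
  have h2 : S * S ≤ X₁ * (X₂ * X₃) := by
    have := mul_le_mul hkey hkey hS0 hrhs0
    calc S * S ≤ (√X₁ * (√X₂ * √X₃)) * (√X₁ * (√X₂ * √X₃)) := this
      _ = (√X₁ * √X₁) * ((√X₂ * √X₂) * (√X₃ * √X₃)) := by ring
      _ = X₁ * (X₂ * X₃) := by
          rw [Real.mul_self_sqrt hX₁0, Real.mul_self_sqrt hX₂0, Real.mul_self_sqrt hX₃0]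
  have hcE₁ : 0 ≤ c * √S * E₁ := by positivity
  have hcE₂ : 0 ≤ c * √S * E₂ := by positivity
  have hcE₃ : 0 ≤ c * √S * E₃ := by positivity
  have h3 : X₁ * (X₂ * X₃) ≤ (c * √S * E₁) * ((c * √S * E₂) * (c * √S * E₃)) := by
    refine mul_le_mul hb1 ?_ (mul_nonneg hX₂0 hX₃0) hcE₁
    exact mul_le_mul hb2 hb3 hX₃0 hcE₂
  have h4 : (c * √S * E₁) * ((c * √S * E₂) * (c * √S * E₃))
      = (c ^ 3 * √S * (E₁ * (E₂ * E₃))) * S := by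
    calc (c * √S * E₁) * ((c * √S * E₂) * (c * √S * E₃))
        = c ^ 3 * ((√S * √S) * √S) * (E₁ * (E₂ * E₃)) := by ring
      _ = (c ^ 3 * √S * (E₁ * (E₂ * E₃))) * S := by rw [hss]; ring
  have h5 : S ≤ c ^ 3 * √S * (E₁ * (E₂ * E₃)) := by
    refine le_of_mul_le_mul_right ?_ hSpos
    calc S * S ≤ X₁ * (X₂ * X₃) := h2
      _ ≤ _ := h3
      _ = _ := h4
  have h6 : S * S ≤ (c ^ 6 * (E₁ * (E₂ * E₃)) ^ 2) * S := by
    have := mul_self_le_mul_self hS0 h5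
    calc S * S ≤ (c ^ 3 * √S * (E₁ * (E₂ * E₃))) * (c ^ 3 * √S * (E₁ * (E₂ * E₃))) := this
      _ = c ^ 6 * (√S * √S) * (E₁ * (E₂ * E₃)) ^ 2 := by ring
      _ = (c ^ 6 * (E₁ * (E₂ * E₃)) ^ 2) * S := by rw [hss]; ring
  exact le_of_mul_le_mul_right (by linarith [h6]) hSpos

lemma box_mem_simp {L : ℝ} (hL : 0 < L) : ((0:ℝ), (0:ℝ), (0:ℝ)) ∈ Box L :=
  ⟨⟨le_refl 0, hL.le⟩, ⟨le_refl 0, hL.le⟩, ⟨le_refl 0, one_pos.le⟩⟩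


set_option maxHeartbeats 2000000 in
/-- Anisotropic Ladyzhenskaya inequality in 3D for p ∈ [2,6]. -/
theorem stmt9 (L : ℝ) (hL : 0 < L) (q : ℝ) (hq : q ∈ Icc (2:ℝ) 6) :
    ∃ C : ℝ, 0 < C ∧ ∀ φ : ℝ × ℝ × ℝ → ℝ, ContDiff ℝ (⊤ : ℕ∞) φ → Per L φ →
      (∫ p in Box L, |φ p| ^ q) ^ (1/q)
        ≤ C * (nL2 L φ) ^ ((6 - q)/(2*q))
            * (nL2 L φ + nL2 L (pdx φ)) ^ ((q - 2)/(2*q))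
            * (nL2 L φ + nL2 L (pdy φ)) ^ ((q - 2)/(2*q))
            * (nL2 L φ + nL2 L (pdz φ)) ^ ((q - 2)/(2*q)) := by
  obtain ⟨hq2, hq6⟩ := hq
  refine ⟨4 + 1/L, by positivity, ?_⟩
  intro φ hφ _
  have h1 : Continuous φ := hφ.continuous
  have hpxc : Continuous (pdx φ) := contPdx hφ
  have hpyc : Continuous (pdy φ) := contPdy hφ
  have hpzc : Continuous (pdz φ) := contPdz hφ
  set c : ℝ := 4 + 1/L with hcdef
  have hc0 : 0 < c := by rw [hcdef]; positivity
  have hc1 : 1 ≤ c := by rw [hcdef]; nlinarith [one_div_pos.mpr hL]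
  set A2 := ∫ p in Box L, φ p ^ 2 with hA2def
  set S := ∫ p in Box L, φ p ^ 6 with hSdef
  set D1 := ∫ p in Box L, pdx φ p ^ 2 with hD1def
  set D2 := ∫ p in Box L, pdy φ p ^ 2 with hD2def
  set D3 := ∫ p in Box L, pdz φ p ^ 2 with hD3def
  have hA2nn : 0 ≤ A2 := setIntegral_nonneg (box_measurable L) fun p _ => by positivity
  have hSnn : 0 ≤ S := setIntegral_nonneg (box_measurable L) fun p _ => by positivity
  have hD1nn : 0 ≤ D1 := setIntegral_nonneg (box_measurable L) fun p _ => by positivity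
  have hD2nn : 0 ≤ D2 := setIntegral_nonneg (box_measurable L) fun p _ => by positivity
  have hD3nn : 0 ≤ D3 := setIntegral_nonneg (box_measurable L) fun p _ => by positivity
  have hnlφ : nL2 L φ = √A2 := by rw [nL2, Real.sqrt_eq_rpow]
  have hnl1 : nL2 L (pdx φ) = √D1 := by rw [nL2, Real.sqrt_eq_rpow]
  have hnl2 : nL2 L (pdy φ) = √D2 := by rw [nL2, Real.sqrt_eq_rpow]
  have hnl3 : nL2 L (pdz φ) = √D3 := by rw [nL2, Real.sqrt_eq_rpow]
  set E₁ := √A2 + √D1 with hE₁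
  set E₂ := √A2 + √D2 with hE₂
  set E₃ := √A2 + √D3 with hE₃
  have hE₁0 : 0 ≤ E₁ := add_nonneg (Real.sqrt_nonneg _) (Real.sqrt_nonneg _)
  have hE₂0 : 0 ≤ E₂ := add_nonneg (Real.sqrt_nonneg _) (Real.sqrt_nonneg _)
  have hE₃0 : 0 ≤ E₃ := add_nonneg (Real.sqrt_nonneg _) (Real.sqrt_nonneg _)
  have hcore : S ≤ c ^ 6 * (E₁ * (E₂ * E₃)) ^ 2 := core6 L hL φ hφ
  rw [hnlφ, hnl1, hnl2, hnl3, ← hE₁, ← hE₂, ← hE₃]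
  -- case q = 2
  rcases eq_or_lt_of_le hq2 with hq2' | hq2'
  · subst hq2'
    have hT : (∫ p in Box L, |φ p| ^ (2:ℝ)) = A2 := by
      refine setIntegral_congr_fun (box_measurable L) fun p _ => ?_
      rw [Real.rpow_two, sq_abs]
    rw [hT]
    norm_num
    rw [← Real.sqrt_eq_rpow]
    nlinarith [Real.sqrt_nonneg A2]
  rcases eq_or_lt_of_le hq6 with hq6' | hq6'
  · -- case q = 6
    rw [hq6']
    have hT : (∫ p in Box L, |φ p| ^ (6:ℝ)) = S := by
      refine setIntegral_congr_fun (box_measurable L) fun p _ => ?_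
      rw [show (6:ℝ) = ((6:ℕ):ℝ) by norm_num, Real.rpow_natCast, ← abs_pow,
        abs_of_nonneg (by positivity)]
    rw [hT]
    norm_num
    have step : S ^ ((1:ℝ)/6) ≤ (c ^ 6 * (E₁ * (E₂ * E₃)) ^ 2) ^ ((1:ℝ)/6) :=
      Real.rpow_le_rpow hSnn hcore (by norm_num)
    have e1 : (c ^ 6 * (E₁ * (E₂ * E₃)) ^ 2) ^ ((1:ℝ)/6)
        = c * (E₁ ^ ((1:ℝ)/3) * (E₂ ^ ((1:ℝ)/3) * E₃ ^ ((1:ℝ)/3))) := by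
      rw [Real.mul_rpow (by positivity) (by positivity)]
      rw [← Real.rpow_natCast c 6, ← Real.rpow_mul hc0.le]
      rw [← Real.rpow_natCast (E₁ * (E₂ * E₃)) 2,
        ← Real.rpow_mul (by positivity)]
      norm_num
      rw [Real.mul_rpow hE₁0 (by positivity), Real.mul_rpow hE₂0 hE₃0]
      exact Or.inl rfl
    rw [e1] at step
    calc S ^ ((1:ℝ)/6) ≤ c * (E₁ ^ ((1:ℝ)/3) * (E₂ ^ ((1:ℝ)/3) * E₃ ^ ((1:ℝ)/3))) := step
      _ = c * 1 * E₁ ^ ((1:ℝ)/3) * E₂ ^ ((1:ℝ)/3) * E₃ ^ ((1:ℝ)/3) := by ring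
      _ = _ := by norm_num
  -- main case 2 < q < 6
  have hq0 : 0 < q := by linarith
  have h6q : 0 < 6 - q := by linarith
  have hqm2 : 0 < q - 2 := by linarith
  set T := ∫ p in Box L, |φ p| ^ q with hTdef
  have hTnn : 0 ≤ T := setIntegral_nonneg (box_measurable L) fun p _ =>
    Real.rpow_nonneg (abs_nonneg _) _
  -- Hölder
  have hconj : Real.HolderConjugate (4/(6-q)) (4/(q-2)) := by
    refine Real.holderConjugate_iff.mpr ⟨?_, ?_⟩
    · rw [lt_div_iff₀ h6q]; linarith
    · rw [show (4/(6-q) : ℝ)⁻¹ = (6-q)/4 by rw [inv_div],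
        show (4/(q-2) : ℝ)⁻¹ = (q-2)/4 by rw [inv_div] ]
      ring
  haveI : IsFiniteMeasure (volume.restrict (Box L)) :=
    ⟨by rw [Measure.restrict_apply_univ]; exact (box_compact L).measure_lt_top⟩
  have hmf : MemLp (fun x => |φ x| ^ ((6-q)/2 : ℝ)) (ENNReal.ofReal (4/(6-q)))
      (volume.restrict (Box L)) := by
    refine memLp_restrict_of_continuous (box_compact L) (box_compact L).measure_lt_top.ne ?_ _
    exact (Real.continuous_rpow_const (by positivity)).comp h1.abs
  have hmg : MemLp (fun x => |φ x| ^ (3*(q-2)/2 : ℝ)) (ENNReal.ofReal (4/(q-2)))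
      (volume.restrict (Box L)) := by
    refine memLp_restrict_of_continuous (box_compact L) (box_compact L).measure_lt_top.ne ?_ _
    exact (Real.continuous_rpow_const (by positivity)).comp h1.abs
  have hH := integral_mul_le_Lp_mul_Lq_of_nonneg hconj
    (ae_of_all _ fun x => Real.rpow_nonneg (abs_nonneg _) _)
    (ae_of_all _ fun x => Real.rpow_nonneg (abs_nonneg _) _) hmf hmg
  have eL : (∫ x in Box L, |φ x| ^ ((6-q)/2 : ℝ) * |φ x| ^ (3*(q-2)/2 : ℝ)) = T := by
    refine setIntegral_congr_fun (box_measurable L) fun p _ => ?_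
    rw [← Real.rpow_add' (abs_nonneg _)
      (by rw [show (6-q)/2 + 3*(q-2)/2 = q by ring]; exact hq0.ne'),
      show (6-q)/2 + 3*(q-2)/2 = q by ring]
  have eF : (∫ x in Box L, (|φ x| ^ ((6-q)/2 : ℝ)) ^ (4/(6-q) : ℝ)) = A2 := by
    refine setIntegral_congr_fun (box_measurable L) fun p _ => ?_
    rw [← Real.rpow_mul (abs_nonneg _), show ((6-q)/2 : ℝ) * (4/(6-q)) = 2 by field_simp; ring,
      Real.rpow_two, sq_abs]
  have eG : (∫ x in Box L, (|φ x| ^ (3*(q-2)/2 : ℝ)) ^ (4/(q-2) : ℝ)) = S := by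
    refine setIntegral_congr_fun (box_measurable L) fun p _ => ?_
    rw [← Real.rpow_mul (abs_nonneg _), show (3*(q-2)/2 : ℝ) * (4/(q-2)) = 6 by field_simp; ring,
      show (6:ℝ) = ((6:ℕ):ℝ) by norm_num, Real.rpow_natCast, ← abs_pow,
      abs_of_nonneg (by positivity)]
  rw [eL, eF, eG, one_div_div, one_div_div] at hH
  -- hH : T ≤ A2 ^ ((6-q)/4) * S ^ ((q-2)/4)
  calc T ^ (1/q)
      ≤ (A2 ^ ((6-q)/4 : ℝ) * S ^ ((q-2)/4 : ℝ)) ^ (1/q) :=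
        Real.rpow_le_rpow hTnn hH (by positivity)
    _ = A2 ^ ((6-q)/(4*q)) * S ^ ((q-2)/(4*q)) := by
        rw [Real.mul_rpow (Real.rpow_nonneg hA2nn _) (Real.rpow_nonneg hSnn _),
          ← Real.rpow_mul hA2nn, ← Real.rpow_mul hSnn,
          show ((6-q)/4 : ℝ) * (1/q) = (6-q)/(4*q) by ring,
          show ((q-2)/4 : ℝ) * (1/q) = (q-2)/(4*q) by ring]
    _ ≤ A2 ^ ((6-q)/(4*q)) * ((c ^ 6 * (E₁ * (E₂ * E₃)) ^ 2) ^ ((q-2)/(4*q) : ℝ)) := by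
        refine mul_le_mul_of_nonneg_left ?_ (Real.rpow_nonneg hA2nn _)
        exact Real.rpow_le_rpow hSnn hcore (by positivity)
    _ = A2 ^ ((6-q)/(4*q)) * (c ^ ((6:ℕ) * ((q-2)/(4*q)) : ℝ)
          * (E₁ * (E₂ * E₃)) ^ ((q-2)/(2*q) : ℝ)) := by
        rw [Real.mul_rpow (by positivity) (by positivity),
          ← Real.rpow_natCast c 6, ← Real.rpow_mul hc0.le,
          ← Real.rpow_natCast (E₁ * (E₂ * E₃)) 2, ← Real.rpow_mul (by positivity),
          show ((2:ℕ) : ℝ) * ((q-2)/(4*q)) = (q-2)/(2*q) by push_cast; ring]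
    _ ≤ A2 ^ ((6-q)/(4*q)) * (c * (E₁ * (E₂ * E₃)) ^ ((q-2)/(2*q) : ℝ)) := by
        refine mul_le_mul_of_nonneg_left ?_ (Real.rpow_nonneg hA2nn _)
        refine mul_le_mul_of_nonneg_right ?_ (Real.rpow_nonneg (by positivity) _)
        calc c ^ ((6:ℕ) * ((q-2)/(4*q)) : ℝ) ≤ c ^ (1:ℝ) := by
              refine Real.rpow_le_rpow_of_exponent_le hc1 ?_
              rw [show ((6:ℕ) * ((q-2)/(4*q)) : ℝ) = 3*(q-2)/(2*q) by push_cast; ring,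
                div_le_one (by positivity)]
              linarith
          _ = c := Real.rpow_one c
    _ = c * A2 ^ ((6-q)/(4*q)) * E₁ ^ ((q-2)/(2*q) : ℝ) * E₂ ^ ((q-2)/(2*q) : ℝ)
          * E₃ ^ ((q-2)/(2*q) : ℝ) := by
        rw [Real.mul_rpow hE₁0 (by positivity), Real.mul_rpow hE₂0 hE₃0]
        ring
    _ = c * √A2 ^ ((6-q)/(2*q)) * E₁ ^ ((q-2)/(2*q)) * E₂ ^ ((q-2)/(2*q))
          * E₃ ^ ((q-2)/(2*q)) := by
        rw [Real.sqrt_eq_rpow, ← Real.rpow_mul hA2nn,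
          show (1/2 : ℝ) * ((6-q)/(2*q)) = (6-q)/(4*q) by ring]
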